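/- Let X be an irreducible positive recurrent stochastically monotone Markov chain on ℤ≥0 with stationary distribution π, and let A_n = {0,1,...,n}. Then for any sequence of general augmentations P_n of the northwest-corner truncations (P_n stochastic on A_n with P_n(x,y) ≥ P(x,y)), any stationary distribution π_n of P_n satisfies ∑_x |π_n(x) − π(x)| → 0 as n → ∞. -/
import Mathlib


open Filter Topology
open scoped BigOperators

/-- `m`-step transition probabilities of a transition matrix `P` on `ℕ`. -/
noncomputable def matPow (P : ℕ → ℕ → ℝ) : ℕ → ℕ → ℕ → ℝ
  | 0 => fun i j => if i = j then 1 else 0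
  | m + 1 => fun i j => ∑' k, matPow P m i k * P k j

namespace MGA

lemma P_le_one {P : ℕ → ℕ → ℝ} (hP0 : ∀ x y, 0 ≤ P x y) (hP1 : ∀ x, HasSum (P x) 1)
    (x y : ℕ) : P x y ≤ 1 :=
  le_hasSum (hP1 x) y (fun j _ => hP0 x j)

lemma summable_mul_col {μ : ℕ → ℝ} (hμs : Summable μ) (hμ0 : ∀ x, 0 ≤ μ x)
    {q : ℕ → ℝ} (hq0 : ∀ x, 0 ≤ q x) (hq1 : ∀ x, q x ≤ 1) :
    Summable (fun x => μ x * q x) :=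
  Summable.of_nonneg_of_le (fun x => mul_nonneg (hμ0 x) (hq0 x))
    (fun x => mul_le_of_le_one_right (hμ0 x) (hq1 x)) hμs

lemma tsum_tail_eq {f : ℕ → ℝ} (h0 : ∀ x, 0 ≤ f x) (h1 : Summable f) (y : ℕ) :
    ∑' w, (if y ≤ w then f w else 0) = (∑' w, f w) - ∑ w ∈ Finset.range y, f w := by
  have hs1 : Summable (fun w => if y ≤ w then f w else 0) := by
    apply h1.of_nonneg_of_le (fun w => ?_) (fun w => ?_) <;> by_cases h : y ≤ w <;>
      simp [h, h0 w]
  have hs2 : Summable (fun w => if y ≤ w then 0 else f w) := by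
    apply h1.of_nonneg_of_le (fun w => ?_) (fun w => ?_) <;> by_cases h : y ≤ w <;>
      simp [h, h0 w]
  have hadd : ∑' w, f w = (∑' w, (if y ≤ w then f w else 0)) + ∑' w, (if y ≤ w then 0 else f w) := by
    rw [← Summable.tsum_add hs1 hs2]
    congr 1; funext w; by_cases h : y ≤ w <;> simp [h]
  have h2 : ∑' w, (if y ≤ w then 0 else f w) = ∑ w ∈ Finset.range y, f w := by
    rw [tsum_eq_sum (s := Finset.range y) (fun w hw => ?_)]
    · exact Finset.sum_congr rfl (fun w hw => by
        simp [Finset.mem_range] at hw; simp [not_le.mpr hw, Nat.not_le_of_lt hw])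
    · simp [Finset.mem_range, not_lt] at hw; simp [hw]
  rw [hadd, h2]; ring

lemma head_anti {P : ℕ → ℕ → ℝ} (hP0 : ∀ x y, 0 ≤ P x y) (hP1 : ∀ x, HasSum (P x) 1)
    (hmono : ∀ y : ℕ, Monotone fun x => ∑' w, if y ≤ w then P x w else 0) (y : ℕ)
    {x x' : ℕ} (hxx' : x ≤ x') :
    ∑ w ∈ Finset.range y, P x' w ≤ ∑ w ∈ Finset.range y, P x w := by
  have h1 := hmono y hxx'
  have e : ∀ z, ∑' w, (if y ≤ w then P z w else 0) = 1 - ∑ w ∈ Finset.range y, P z w := by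
    intro z
    rw [tsum_tail_eq (hP0 z) (hP1 z).summable, (hP1 z).tsum_eq]
  simp only [e x, e x'] at h1
  linarith

lemma act_mass {P : ℕ → ℕ → ℝ} (hP0 : ∀ x y, 0 ≤ P x y) (hP1 : ∀ x, HasSum (P x) 1)
    {μ : ℕ → ℝ} (hμ0 : ∀ x, 0 ≤ μ x) (hμs : Summable μ) :
    Summable (fun y => ∑' x, μ x * P x y) ∧ (∑' y, ∑' x, μ x * P x y) = ∑' x, μ x := by
  set F : ℕ × ℕ → ℝ := fun p => μ p.1 * P p.1 p.2 with hF
  have hF0 : 0 ≤ F := fun p => mul_nonneg (hμ0 _) (hP0 _ _)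
  have hslice : ∀ x, Summable fun y => F (x, y) := fun x => (hP1 x).summable.mul_left (μ x)
  have hrow : ∀ x, ∑' y, F (x, y) = μ x := fun x => by
    rw [hF]; simp only; rw [tsum_mul_left, (hP1 x).tsum_eq, mul_one]
  have hsums : Summable fun x => ∑' y, F (x, y) := by
    simp only [hrow]; exact hμs
  have hFs : Summable F := (summable_prod_of_nonneg hF0).2 ⟨hslice, hsums⟩
  have hcol : ∀ y, Summable fun x => μ x * P x y := fun y =>
    summable_mul_col hμs hμ0 (fun x => hP0 x y) (fun x => P_le_one hP0 hP1 x y)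
  constructor
  · have hsym : Summable (fun p : ℕ × ℕ => F p.swap) := hFs.prod_symm
    have := (summable_prod_of_nonneg (fun p => hF0 p.swap)).1 hsym
    exact this.2
  · have hcomm : ∑' y, ∑' x, (fun x y => F (x,y)) x y = ∑' x, ∑' y, (fun x y => F (x,y)) x y :=
      Summable.tsum_comm' hFs hslice (fun y => hcol y)
    calc ∑' y, ∑' x, μ x * P x y = ∑' x, ∑' y, F (x, y) := hcomm
    _ = ∑' x, μ x := by simp only [hrow]


lemma matPow_nonneg {P : ℕ → ℕ → ℝ} (hP0 : ∀ x y, 0 ≤ P x y) :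
    ∀ m x y, 0 ≤ matPow P m x y := by
  intro m
  induction m with
  | zero => intro x y; simp only [matPow]; positivity
  | succ m ih =>
    intro x y
    simp only [matPow]
    exact tsum_nonneg (fun k => mul_nonneg (ih x k) (hP0 k y))

lemma matPow_hasSum {P : ℕ → ℕ → ℝ} (hP0 : ∀ x y, 0 ≤ P x y) (hP1 : ∀ x, HasSum (P x) 1) :
    ∀ m x, HasSum (matPow P m x) 1 := by
  intro m
  induction m with
  | zero =>
    intro x
    have : (matPow P 0 x) = fun j => if j = x then (1:ℝ) else 0 := by
      funext j; simp only [matPow]; by_cases h : x = j <;> simp [h, eq_comm]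
    rw [this]
    exact hasSum_ite_eq x 1
  | succ m ih =>
    intro x
    have h := act_mass hP0 hP1 (μ := matPow P m x)
      (fun k => matPow_nonneg hP0 m x k) (ih x).summable
    have he : (matPow P (m+1) x) = fun j => ∑' k, matPow P m x k * P k j := by
      funext j; simp only [matPow]
    rw [he]
    have : ∑' j, ∑' k, matPow P m x k * P k j = 1 := by rw [h.2, (ih x).tsum_eq]
    exact this ▸ h.1.hasSum

lemma matPow_le_one {P : ℕ → ℕ → ℝ} (hP0 : ∀ x y, 0 ≤ P x y) (hP1 : ∀ x, HasSum (P x) 1)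
    (m x y : ℕ) : matPow P m x y ≤ 1 :=
  le_hasSum (matPow_hasSum hP0 hP1 m x) y (fun j _ => matPow_nonneg hP0 m x j)

/-- stationarity propagates to powers, for signed summable `σ`. -/
lemma stat_matPow {P : ℕ → ℕ → ℝ} (hP0 : ∀ x y, 0 ≤ P x y) (hP1 : ∀ x, HasSum (P x) 1)
    {σ : ℕ → ℝ} (hσs : Summable σ) (hstat : ∀ y, ∑' x, σ x * P x y = σ y) :
    ∀ m, (∀ y, Summable (fun x => σ x * matPow P m x y)) ∧
      (∀ y, ∑' x, σ x * matPow P m x y = σ y) := by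
  have habs : Summable (fun x => |σ x|) := hσs.abs
  have hsummain : ∀ m y, Summable (fun x => σ x * matPow P m x y) := by
    intro m y
    apply Summable.of_abs
    apply habs.of_nonneg_of_le (fun x => abs_nonneg _) (fun x => ?_)
    rw [abs_mul, abs_of_nonneg (matPow_nonneg hP0 m x y)]
    exact mul_le_of_le_one_right (abs_nonneg _) (matPow_le_one hP0 hP1 m x y)
  intro m
  refine ⟨hsummain m, ?_⟩
  induction m with
  | zero =>
    intro y
    simp only [matPow]
    rw [tsum_eq_single y (fun x hx => by simp [hx])]
    simp
  | succ m ih =>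
    intro y
    -- Fubini
    set F : ℕ × ℕ → ℝ := fun p => (σ p.1 * matPow P m p.1 p.2) * P p.2 y with hFdef
    have hslice : ∀ x, Summable (fun k => F (x, k)) := by
      intro x
      apply Summable.of_abs
      have : Summable (fun k => |σ x| * (matPow P m x k * P k y)) := by
        apply Summable.mul_left
        apply ((matPow_hasSum hP0 hP1 m x).summable).of_nonneg_of_le
          (fun k => mul_nonneg (matPow_nonneg hP0 m x k) (hP0 k y))
          (fun k => mul_le_of_le_one_right (matPow_nonneg hP0 m x k) (P_le_one hP0 hP1 k y))
      apply this.of_nonneg_of_le (fun k => abs_nonneg _) (fun k => ?_)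
      rw [hFdef]; simp only
      rw [abs_mul, abs_mul, abs_of_nonneg (matPow_nonneg hP0 m x k),
        abs_of_nonneg (hP0 k y), mul_assoc]
    have hrowval : ∀ x, ∑' k, |F (x, k)| = |σ x| * matPow P (m+1) x y := by
      intro x
      have : (fun k => |F (x,k)|) = fun k => |σ x| * (matPow P m x k * P k y) := by
        funext k
        rw [hFdef]; simp only
        rw [abs_mul, abs_mul, abs_of_nonneg (matPow_nonneg hP0 m x k),
          abs_of_nonneg (hP0 k y), mul_assoc]
      rw [this, tsum_mul_left]
      simp only [matPow]
    have hFabs : Summable (fun p : ℕ × ℕ => |F p|) := by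
      apply (summable_prod_of_nonneg (fun p => abs_nonneg (F p))).2
      constructor
      · intro x; exact (hslice x).abs
      · simp only [hrowval]
        apply habs.of_nonneg_of_le
          (fun x => mul_nonneg (abs_nonneg _) (matPow_nonneg hP0 (m+1) x y))
          (fun x => mul_le_of_le_one_right (abs_nonneg _) (matPow_le_one hP0 hP1 (m+1) x y))
    have hFs : Summable F := hFabs.of_abs
    have key : ∑' x, ∑' k, F (x, k) = ∑' k, ∑' x, F (x, k) := by
      have hcol : ∀ k, Summable (fun x => F (x, k)) := by
        intro k
        apply Summable.of_abs
        apply habs.of_nonneg_of_le (fun x => abs_nonneg _) (fun x => ?_)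
        rw [hFdef]; simp only
        rw [abs_mul, abs_mul, abs_of_nonneg (matPow_nonneg hP0 m x k), abs_of_nonneg (hP0 k y)]
        nlinarith [matPow_le_one hP0 hP1 m x k, P_le_one hP0 hP1 k y,
          matPow_nonneg hP0 m x k, hP0 k y, abs_nonneg (σ x),
          mul_nonneg (abs_nonneg (σ x)) (matPow_nonneg hP0 m x k)]
      exact (Summable.tsum_comm' (f := fun x k => F (x, k)) hFs hslice hcol).symm
    calc ∑' x, σ x * matPow P (m+1) x y
        = ∑' x, ∑' k, F (x, k) := by
          congr 1; funext x
          simp only [matPow, hFdef]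
          rw [← tsum_mul_left]
          congr 1; funext k; ring
      _ = ∑' k, ∑' x, F (x, k) := key
      _ = ∑' k, (∑' x, σ x * matPow P m x k) * P k y := by
          congr 1; funext k
          rw [hFdef, ← tsum_mul_right]
      _ = ∑' k, σ k * P k y := by
          congr 1; funext k; rw [ih k]
      _ = σ y := hstat y


/-- ultrafilter limits of bounded sequences exist -/
lemma exists_ulim (U : Ultrafilter ℕ) (f : ℕ → ℝ) (a b : ℝ) (h : ∀ n, f n ∈ Set.Icc a b) :
    ∃ l ∈ Set.Icc a b, Tendsto f U (𝓝 l) := by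
  have hc : IsCompact (Set.Icc a b) := isCompact_Icc
  have hmem : ↑(Ultrafilter.map f U) ≤ 𝓟 (Set.Icc a b) := by
    rw [le_principal_iff, Ultrafilter.coe_map, Filter.mem_map]
    exact Filter.univ_mem' h
  obtain ⟨l, hl, hle⟩ := hc.ultrafilter_le_nhds (Ultrafilter.map f U) hmem
  refine ⟨l, hl, ?_⟩
  rwa [Filter.Tendsto, ← Ultrafilter.coe_map]

/-- comparison of expectations of a nonincreasing nonneg function against
stochastically comparable measures -/
lemma exp_comp {μ ν g : ℕ → ℝ} (hμ0 : ∀ x, 0 ≤ μ x) (hν0 : ∀ x, 0 ≤ ν x)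
    (hμs : Summable μ) (hνs : Summable ν)
    (hg0 : ∀ x, 0 ≤ g x) (hg1 : ∀ x, g x ≤ 1) (hganti : Antitone g)
    (hheads : ∀ K, ∑ x ∈ Finset.range K, ν x ≤ ∑ x ∈ Finset.range K, μ x) :
    ∑' x, ν x * g x ≤ ∑' x, μ x * g x := by
  have hμgs : Summable (fun x => μ x * g x) :=
    hμs.of_nonneg_of_le (fun x => mul_nonneg (hμ0 x) (hg0 x))
      (fun x => mul_le_of_le_one_right (hμ0 x) (hg1 x))
  have hνgs : Summable (fun x => ν x * g x) :=
    hνs.of_nonneg_of_le (fun x => mul_nonneg (hν0 x) (hg0 x))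
      (fun x => mul_le_of_le_one_right (hν0 x) (hg1 x))
  have key : ∀ K, (∑ x ∈ Finset.range K, μ x - ∑ x ∈ Finset.range K, ν x) * g K ≤
      ∑ x ∈ Finset.range K, (μ x * g x - ν x * g x) := by
    intro K
    induction K with
    | zero => simp
    | succ K ih =>
      have e1 := Finset.sum_range_succ μ K
      have e2 := Finset.sum_range_succ ν K
      have e3 := Finset.sum_range_succ (fun x => μ x * g x - ν x * g x) K
      rw [e1, e2, e3]
      have hD' : 0 ≤ ∑ x ∈ Finset.range K, μ x + μ K - (∑ x ∈ Finset.range K, ν x + ν K) := by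
        have := hheads (K+1); rw [e1, e2] at this; linarith
      have hgK : g (K+1) ≤ g K := hganti (Nat.le_succ K)
      have t1 : (∑ x ∈ Finset.range K, μ x + μ K - (∑ x ∈ Finset.range K, ν x + ν K)) * g (K+1)
          ≤ (∑ x ∈ Finset.range K, μ x + μ K - (∑ x ∈ Finset.range K, ν x + ν K)) * g K :=
        mul_le_mul_of_nonneg_left hgK hD'
      have t2 : (∑ x ∈ Finset.range K, μ x + μ K - (∑ x ∈ Finset.range K, ν x + ν K)) * g K
          = (∑ x ∈ Finset.range K, μ x - ∑ x ∈ Finset.range K, ν x) * g K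
            + (μ K * g K - ν K * g K) := by ring
      linarith [ih]
  have hpos : ∀ K, 0 ≤ ∑ x ∈ Finset.range K, (μ x * g x - ν x * g x) := by
    intro K
    refine le_trans ?_ (key K)
    apply mul_nonneg _ (hg0 K)
    have := hheads K; linarith
  have hdiff : 0 ≤ ∑' x, (μ x * g x - ν x * g x) := by
    have hsum : Summable (fun x => μ x * g x - ν x * g x) := hμgs.sub hνgs
    have := hsum.hasSum.tendsto_sum_nat
    exact ge_of_tendsto this (Filter.Eventually.of_forall hpos)
  have := Summable.tsum_sub hμgs hνgs
  rw [this] at hdiff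
  linarith


section
variable {P : ℕ → ℕ → ℝ} {π : ℕ → ℝ}
variable (hP0 : ∀ x y, 0 ≤ P x y) (hP1 : ∀ x, HasSum (P x) 1)
  (hirred : ∀ x y, ∃ m, 0 < matPow P m x y)
  (hπ0 : ∀ x, 0 ≤ π x) (hπ1 : HasSum π 1) (hπstat : ∀ y, ∑' x, π x * P x y = π y)

include hP0 hP1 hirred hπ0 hπ1 hπstat in
lemma pi_pos : ∀ y, 0 < π y := by
  intro y
  obtain ⟨x0, hx0⟩ : ∃ x0, 0 < π x0 := by
    by_contra h
    push_neg at h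
    have hz : ∀ x, π x = 0 := fun x => le_antisymm (h x) (hπ0 x)
    have h1 := hπ1.tsum_eq
    rw [tsum_eq_sum (s := ∅) (fun x _ => hz x)] at h1
    simp at h1
  obtain ⟨m, hm⟩ := hirred x0 y
  have hstat := (stat_matPow hP0 hP1 hπ1.summable hπstat m)
  have h1 : π x0 * matPow P m x0 y ≤ ∑' x, π x * matPow P m x y :=
    Summable.le_tsum (hstat.1 y) x0 (fun x _ => mul_nonneg (hπ0 x) (matPow_nonneg hP0 m x y))
  rw [hstat.2 y] at h1
  have : 0 < π x0 * matPow P m x0 y := mul_pos hx0 hm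
  linarith

include hP0 hP1 hirred hπ0 hπ1 hπstat in
/-- uniqueness of the stationary distribution -/
lemma stat_unique {μ : ℕ → ℝ} (hμ0 : ∀ x, 0 ≤ μ x) (hμs : Summable μ)
    (hμ1 : ∑' x, μ x = 1) (hμstat : ∀ y, ∑' x, μ x * P x y = μ y) : μ = π := by
  classical
  set σ : ℕ → ℝ := fun x => μ x - π x with hσdef
  have hσs : Summable σ := hμs.sub hπ1.summable
  have hcolμ : ∀ y, Summable fun x => μ x * P x y := fun y =>
    summable_mul_col hμs hμ0 (fun x => hP0 x y) (fun x => P_le_one hP0 hP1 x y)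
  have hcolπ : ∀ y, Summable fun x => π x * P x y := fun y =>
    summable_mul_col hπ1.summable hπ0 (fun x => hP0 x y) (fun x => P_le_one hP0 hP1 x y)
  have hσstat : ∀ y, ∑' x, σ x * P x y = σ y := by
    intro y
    have : (fun x => σ x * P x y) = fun x => μ x * P x y - π x * P x y := by
      funext x; rw [hσdef]; ring
    rw [this, Summable.tsum_sub (hcolμ y) (hcolπ y), hμstat y, hπstat y]
  -- τ = |σ| is also stationary
  set τ : ℕ → ℝ := fun x => |σ x| with hτdef
  have hτs : Summable τ := hσs.abs
  have hτ0 : ∀ x, 0 ≤ τ x := fun x => abs_nonneg _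
  have hcolτ : ∀ y, Summable fun x => τ x * P x y := fun y =>
    summable_mul_col hτs hτ0 (fun x => hP0 x y) (fun x => P_le_one hP0 hP1 x y)
  have hσcol : ∀ y, Summable fun x => σ x * P x y := fun y =>
    ((hcolμ y).sub (hcolπ y)).congr (fun x => by rw [hσdef]; ring)
  have habs_eq : ∀ y, (fun x => ‖σ x * P x y‖) = fun x => τ x * P x y := by
    intro y; funext x
    rw [Real.norm_eq_abs, abs_mul, abs_of_nonneg (hP0 x y), hτdef]
  have hsub : ∀ y, τ y ≤ ∑' x, τ x * P x y := by
    intro y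
    have h1 : ‖∑' x, σ x * P x y‖ ≤ ∑' x, ‖σ x * P x y‖ :=
      norm_tsum_le_tsum_norm (by rw [habs_eq y]; exact hcolτ y)
    rw [hσstat y, habs_eq y, Real.norm_eq_abs] at h1
    exact h1
  -- total masses agree, so τ is stationary
  have hmass := act_mass hP0 hP1 hτ0 hτs
  have hτstat : ∀ y, ∑' x, τ x * P x y = τ y := by
    by_contra hne
    push_neg at hne
    obtain ⟨y0, hy0⟩ := hne
    have hlt : τ y0 < ∑' x, τ x * P x y0 := lt_of_le_of_ne (hsub y0) (Ne.symm hy0)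
    have : ∑' y, τ y < ∑' y, ∑' x, τ x * P x y :=
      Summable.tsum_lt_tsum (fun y => hsub y) hlt hτs hmass.1
    rw [hmass.2] at this
    exact lt_irrefl _ this
  -- the contradiction argument
  have hτpow := stat_matPow hP0 hP1 hτs hτstat
  have hσpow := stat_matPow hP0 hP1 hσs hσstat
  by_contra hne
  have hσne : ∃ x, σ x ≠ 0 := by
    by_contra hz
    push_neg at hz
    apply hne
    funext x
    have := hz x
    rw [hσdef] at this
    simp only at this
    linarith
  have hσsum0 : ∑' x, σ x = 0 := by
    have : ∑' x, σ x = (∑' x, μ x) - ∑' x, π x := Summable.tsum_sub hμs hπ1.summable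
    rw [this, hμ1, hπ1.tsum_eq]; ring
  -- σ must take both signs
  obtain ⟨a, ha⟩ : ∃ a, 0 < σ a := by
    by_contra h
    push_neg at h
    obtain ⟨x, hx⟩ := hσne
    have hxneg : σ x < 0 := lt_of_le_of_ne (h x) hx
    have : ∑' z, (-σ z) = 0 := by
      rw [tsum_neg, hσsum0]; ring
    have hle : -σ x ≤ ∑' z, -σ z :=
      Summable.le_tsum hσs.neg x (fun z _ => by simpa using h z)
    rw [this] at hle
    linarith
  obtain ⟨b, hb⟩ : ∃ b, σ b < 0 := by
    by_contra h
    push_neg at h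
    have hle : σ a ≤ ∑' z, σ z := Summable.le_tsum hσs a (fun z _ => h z)
    rw [hσsum0] at hle
    linarith
  obtain ⟨m, hm⟩ := hirred a b
  have h1 : ∑' x, σ x * matPow P m x b = σ b := (hσpow m).2 b
  have h2 : ∑' x, τ x * matPow P m x b = τ b := (hτpow m).2 b
  have h3 : ∑' x, (τ x + σ x) * matPow P m x b = τ b + σ b := by
    have : (fun x => (τ x + σ x) * matPow P m x b) =
        fun x => τ x * matPow P m x b + σ x * matPow P m x b := by
      funext x; ring
    rw [this, Summable.tsum_add ((hτpow m).1 b) ((hσpow m).1 b), h1, h2]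
  have hτb : τ b + σ b = 0 := by
    rw [hτdef]; simp only
    rw [abs_of_neg hb]; ring
  rw [hτb] at h3
  have hterm : (τ a + σ a) * matPow P m a b ≤ ∑' x, (τ x + σ x) * matPow P m x b := by
    apply Summable.le_tsum _ a (fun x _ => mul_nonneg ?_ (matPow_nonneg hP0 m x b))
    · exact (((hτpow m).1 b).add ((hσpow m).1 b)).congr (fun x => by ring)
    · have := neg_abs_le (σ x)
      rw [hτdef]; simp only
      linarith
  rw [h3] at hterm
  have hτa : τ a + σ a = 2 * σ a := by
    rw [hτdef]; simp only; rw [abs_of_pos ha]; ring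
  nlinarith

end

section
variable {P : ℕ → ℕ → ℝ} {π : ℕ → ℝ}
variable (hP0 : ∀ x y, 0 ≤ P x y) (hP1 : ∀ x, HasSum (P x) 1)
  (hirred : ∀ x y, ∃ m, 0 < matPow P m x y)
  (hπ0 : ∀ x, 0 ≤ π x) (hπ1 : HasSum π 1) (hπstat : ∀ y, ∑' x, π x * P x y = π y)

include hP0 hP1 hirred hπ0 hπ1 hπstat in
lemma substat_eq_pi {μ : ℕ → ℝ} (hμ0 : ∀ x, 0 ≤ μ x) (hμs : Summable μ)
    (hμ1 : ∑' x, μ x = 1) (hsub : ∀ y, ∑' x, μ x * P x y ≤ μ y) : μ = π := by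
  have hmass := act_mass hP0 hP1 hμ0 hμs
  have hstat : ∀ y, ∑' x, μ x * P x y = μ y := by
    by_contra hne
    push_neg at hne
    obtain ⟨y0, hy0⟩ := hne
    have hlt : ∑' x, μ x * P x y0 < μ y0 := lt_of_le_of_ne (hsub y0) hy0
    have : ∑' y, ∑' x, μ x * P x y < ∑' y, μ y :=
      Summable.tsum_lt_tsum (fun y => hsub y) hlt hmass.1 hμs
    rw [hmass.2] at this
    exact lt_irrefl _ this
  exact stat_unique hP0 hP1 hirred hπ0 hπ1 hπstat hμ0 hμs hμ1 hstat

end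

section
variable {P : ℕ → ℕ → ℝ} {π : ℕ → ℝ}
variable (hP0 : ∀ x y, 0 ≤ P x y) (hP1 : ∀ x, HasSum (P x) 1)
  (hirred : ∀ x y, ∃ m, 0 < matPow P m x y)
  (hmono : ∀ y : ℕ, Monotone fun x => ∑' w, if y ≤ w then P x w else 0)
  (hπ0 : ∀ x, 0 ≤ π x) (hπ1 : HasSum π 1) (hπstat : ∀ y, ∑' x, π x * P x y = π y)

include hP0 hP1 hirred hmono hπ0 hπ1 hπstat in
/-- key comparison: heads of `π` are below heads of any augmentation stationary dist. -/
lemma heads_le (n : ℕ) (Q : ℕ → ℕ → ℝ) (p : ℕ → ℝ)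
    (hQ0 : ∀ x y, 0 ≤ Q x y)
    (hQ1 : ∀ x ≤ n, ∑ y ∈ Finset.range (n+1), Q x y = 1)
    (hQge : ∀ x ≤ n, ∀ y ≤ n, P x y ≤ Q x y)
    (hp0 : ∀ x, 0 ≤ p x) (hpsupp : ∀ x, n < x → p x = 0)
    (hpprob : ∑ x ∈ Finset.range (n+1), p x = 1)
    (hpstat : ∀ y ≤ n, ∑ x ∈ Finset.range (n+1), p x * Q x y = p y) :
    ∀ K, ∑ x ∈ Finset.range K, π x ≤ ∑ x ∈ Finset.range K, p x := by
  classical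
  have hπpos := pi_pos hP0 hP1 hirred hπ0 hπ1 hπstat
  -- summability and mass of p
  have hps : Summable p := summable_of_ne_finset_zero (s := Finset.range (n+1))
    (fun x hx => hpsupp x (by simpa [Finset.mem_range, Nat.lt_succ_iff, not_le] using hx))
  have hptsum : ∑' x, p x = 1 := by
    rw [tsum_eq_sum (s := Finset.range (n+1))
      (fun x hx => hpsupp x (by simpa [Finset.mem_range, Nat.lt_succ_iff, not_le] using hx))]
    exact hpprob
  have hple1 : ∀ x, p x ≤ 1 := by
    intro x
    by_cases hx : x ≤ n
    · calc p x ≤ ∑ z ∈ Finset.range (n+1), p z :=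
          Finset.single_le_sum (fun z _ => hp0 z) (by simp [Finset.mem_range, Nat.lt_succ_iff, hx])
      _ = 1 := hpprob
    · rw [hpsupp x (not_le.mp hx)]; norm_num
  -- domination constant
  set δ : ℝ := (Finset.range (n+1)).inf' (by simp) π with hδdef
  have hδpos : 0 < δ := by
    rw [hδdef]
    apply (Finset.lt_inf'_iff _).2
    intro x _
    exact hπpos x
  set c : ℝ := δ⁻¹ with hcdef
  have hc0 : 0 ≤ c := le_of_lt (by rw [hcdef]; exact inv_pos.mpr hδpos)
  have hdom_p : ∀ x, p x ≤ c * π x := by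
    intro x
    by_cases hx : x ≤ n
    · have h1 : δ ≤ π x := Finset.inf'_le _ (by simp [Finset.mem_range, Nat.lt_succ_iff, hx])
      have : (1:ℝ) ≤ c * π x := by
        rw [hcdef]
        rw [show (1:ℝ) = δ⁻¹ * δ by field_simp]
        exact mul_le_mul_of_nonneg_left h1 (by positivity)
      linarith [hple1 x]
    · rw [hpsupp x (not_le.mp hx)]
      exact mul_nonneg hc0 (hπ0 x)
  -- the evolved measures
  set ν : ℕ → ℕ → ℝ := fun m => (fun (μ : ℕ → ℝ) y => ∑' x, μ x * P x y)^[m] p with hνdef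
  have hν_zero : ν 0 = p := rfl
  have hν_succ : ∀ m, ν (m+1) = fun y => ∑' x, ν m x * P x y := by
    intro m
    rw [hνdef]
    exact Function.iterate_succ_apply' _ m p
  -- basic induction facts
  have hνfacts : ∀ m, (∀ x, 0 ≤ ν m x) ∧ (∀ x, ν m x ≤ c * π x) ∧ Summable (ν m)
      ∧ (∑' x, ν m x) = 1 := by
    intro m
    induction m with
    | zero => exact ⟨hp0, hdom_p, hps, hptsum⟩
    | succ m ih =>
      obtain ⟨ih0, ihdom, ihs, ihm⟩ := ih
      have hcol : ∀ y, Summable fun x => ν m x * P x y := fun y =>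
        summable_mul_col ihs ih0 (fun x => hP0 x y) (fun x => P_le_one hP0 hP1 x y)
      have hdom : ∀ y, ν (m+1) y ≤ c * π y := by
        intro y
        rw [hν_succ m]
        have h1 : Summable fun x => (c * π x) * P x y := by
          have := (summable_mul_col hπ1.summable hπ0 (fun x => hP0 x y)
            (fun x => P_le_one hP0 hP1 x y)).mul_left c
          exact this.congr (fun x => by ring)
        have h2 : ∑' x, ν m x * P x y ≤ ∑' x, (c * π x) * P x y := by
          apply Summable.tsum_le_tsum (fun x => ?_) (hcol y) h1
          exact mul_le_mul_of_nonneg_right (ihdom x) (hP0 x y)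
        have h3 : ∑' x, (c * π x) * P x y = c * π y := by
          calc ∑' x, (c * π x) * P x y = ∑' x, c * (π x * P x y) := by
                congr 1; funext x; ring
          _ = c * ∑' x, π x * P x y := tsum_mul_left
          _ = c * π y := by rw [hπstat y]
        linarith
      have h0 : ∀ x, 0 ≤ ν (m+1) x := by
        intro x
        rw [hν_succ m]
        exact tsum_nonneg (fun k => mul_nonneg (ih0 k) (hP0 k x))
      have hmass := act_mass hP0 hP1 ih0 ihs
      have hsum : Summable (ν (m+1)) := by
        rw [hν_succ m]; exact hmass.1
      have hm1 : ∑' x, ν (m+1) x = 1 := by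
        rw [hν_succ m]
        rw [hmass.2, ihm]
      exact ⟨h0, hdom, hsum, hm1⟩
  -- heads comparison by induction
  have hheads : ∀ m K, ∑ x ∈ Finset.range K, ν m x ≤ ∑ x ∈ Finset.range K, p x := by
    intro m
    induction m with
    | zero => intro K; simp [hν_zero]
    | succ m ih =>
      intro K
      obtain ⟨ih0, ihdom, ihs, ihm⟩ := hνfacts m
      set g : ℕ → ℝ := fun x => ∑ w ∈ Finset.range K, P x w with hgdef
      have hg0 : ∀ x, 0 ≤ g x := fun x => Finset.sum_nonneg (fun w _ => hP0 x w)
      have hg1 : ∀ x, g x ≤ 1 := by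
        intro x
        rw [hgdef]
        calc ∑ w ∈ Finset.range K, P x w ≤ ∑' w, P x w :=
            Summable.sum_le_tsum _ (fun w _ => hP0 x w) (hP1 x).summable
        _ = 1 := (hP1 x).tsum_eq
      have hganti : Antitone g := fun x x' h => head_anti hP0 hP1 hmono K h
      have hcol : ∀ w, Summable fun x => ν m x * P x w := fun w =>
        summable_mul_col ihs ih0 (fun x => hP0 x w) (fun x => P_le_one hP0 hP1 x w)
      -- head of ν (m+1) = expectation of g under ν m
      have e1 : ∑ w ∈ Finset.range K, ν (m+1) w = ∑' x, ν m x * g x := by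
        rw [hν_succ m]
        simp only
        rw [← Summable.tsum_finsetSum (fun w _ => hcol w)]
        congr 1; funext x
        rw [hgdef, Finset.mul_sum]
      -- expectation against p dominates
      have e2 : ∑' x, ν m x * g x ≤ ∑' x, p x * g x :=
        exp_comp hp0 ih0 hps ihs hg0 hg1 hganti (fun K' => ih K')
      -- expectation of g under p is at most head of p
      have e3 : ∑' x, p x * g x ≤ ∑ w ∈ Finset.range K, p w := by
        have ht : ∑' x, p x * g x = ∑ x ∈ Finset.range (n+1), p x * g x := by
          apply tsum_eq_sum
          intro x hx
          rw [hpsupp x (by simpa [Finset.mem_range, Nat.lt_succ_iff, not_le] using hx)]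
          ring
        set M : ℕ := min K (n+1) with hMdef
        have hheadp : ∑ w ∈ Finset.range K, p w = ∑ w ∈ Finset.range M, p w := by
          rcases le_or_gt K (n+1) with h | h
          · rw [hMdef, min_eq_left h]
          · rw [hMdef, min_eq_right (le_of_lt h)]
            symm
            apply Finset.sum_subset
            · exact Finset.range_subset_range.2 (le_of_lt h)
            · intro x _ hx
              exact hpsupp x (by simpa [Finset.mem_range, Nat.lt_succ_iff, not_le] using hx)
        have hstatsum : ∑ w ∈ Finset.range M, p w
            = ∑ x ∈ Finset.range (n+1), p x * (∑ w ∈ Finset.range M, Q x w) := by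
          have hMle : M ≤ n + 1 := min_le_right _ _
          calc ∑ w ∈ Finset.range M, p w
              = ∑ w ∈ Finset.range M, ∑ x ∈ Finset.range (n+1), p x * Q x w := by
                apply Finset.sum_congr rfl
                intro w hw
                rw [hpstat w (by
                  have := Finset.mem_range.mp hw
                  omega)]
            _ = ∑ x ∈ Finset.range (n+1), ∑ w ∈ Finset.range M, p x * Q x w :=
                Finset.sum_comm
            _ = ∑ x ∈ Finset.range (n+1), p x * (∑ w ∈ Finset.range M, Q x w) := by
                apply Finset.sum_congr rfl
                intro x _
                rw [Finset.mul_sum]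
        have hterm : ∀ x ∈ Finset.range (n+1), p x * g x ≤ p x * (∑ w ∈ Finset.range M, Q x w) := by
          intro x hx
          have hxn : x ≤ n := by
            have := Finset.mem_range.mp hx; omega
          apply mul_le_mul_of_nonneg_left _ (hp0 x)
          rcases le_or_gt K (n+1) with h | h
          · have hMK : M = K := min_eq_left h
            rw [hMK, hgdef]
            apply Finset.sum_le_sum
            intro w hw
            have hwn : w ≤ n := by
              have := Finset.mem_range.mp hw; omega
            exact hQge x hxn w hwn
          · have hMn : M = n+1 := min_eq_right (le_of_lt h)
            rw [hMn, hQ1 x hxn]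
            exact hg1 x
        rw [ht, hheadp, hstatsum]
        exact Finset.sum_le_sum hterm
      calc ∑ w ∈ Finset.range K, ν (m+1) w = ∑' x, ν m x * g x := e1
        _ ≤ ∑' x, p x * g x := e2
        _ ≤ ∑ w ∈ Finset.range K, p w := e3
  -- Cesàro averages
  set b : ℕ → ℕ → ℝ := fun M x => (∑ m ∈ Finset.range M, ν m x) / M with hbdef
  have hb0 : ∀ M x, 0 ≤ b M x := by
    intro M x
    rw [hbdef]
    apply div_nonneg (Finset.sum_nonneg (fun m _ => (hνfacts m).1 x)) (Nat.cast_nonneg M)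
  have hbdom : ∀ M x, b M x ≤ c * π x := by
    intro M x
    rcases Nat.eq_zero_or_pos M with h | h
    · subst h
      rw [hbdef]
      simp only [Finset.range_zero, Finset.sum_empty, Nat.cast_zero, div_zero]
      exact mul_nonneg hc0 (hπ0 x)
    · rw [hbdef]
      simp only
      rw [div_le_iff₀ (by exact_mod_cast h)]
      calc ∑ m ∈ Finset.range M, ν m x ≤ ∑ m ∈ Finset.range M, c * π x :=
          Finset.sum_le_sum (fun m _ => (hνfacts m).2.1 x)
      _ = M * (c * π x) := by rw [Finset.sum_const, Finset.card_range]; ring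
      _ = c * π x * M := by ring
  have hbs : ∀ M, Summable (b M) := by
    intro M
    apply Summable.of_nonneg_of_le (hb0 M) (fun x => hbdom M x)
    exact hπ1.summable.mul_left c
  have hbheads : ∀ M K, ∑ x ∈ Finset.range K, b M x ≤ ∑ x ∈ Finset.range K, p x := by
    intro M K
    have hswap : ∑ x ∈ Finset.range K, b M x
        = (∑ m ∈ Finset.range M, ∑ x ∈ Finset.range K, ν m x) / M := by
      rw [hbdef]
      simp only
      rw [← Finset.sum_div]
      congr 1
      exact Finset.sum_comm
    rcases Nat.eq_zero_or_pos M with h | h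
    · subst h
      simp [hswap]
      exact Finset.sum_nonneg (fun x _ => hp0 x)
    · rw [hswap, div_le_iff₀ (by exact_mod_cast h)]
      calc ∑ m ∈ Finset.range M, ∑ x ∈ Finset.range K, ν m x
          ≤ ∑ m ∈ Finset.range M, ∑ x ∈ Finset.range K, p x :=
            Finset.sum_le_sum (fun m _ => hheads m K)
        _ = (∑ x ∈ Finset.range K, p x) * M := by
            rw [Finset.sum_const, Finset.card_range]; ring
  have hbmass : ∀ M, 1 ≤ M → ∑' x, b M x = 1 := by
    intro M hM
    rw [hbdef]
    simp only
    rw [tsum_div_const, Summable.tsum_finsetSum (fun m _ => (hνfacts m).2.2.1)]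
    have : ∑ m ∈ Finset.range M, ∑' x, ν m x = M := by
      rw [Finset.sum_congr rfl (fun m _ => (hνfacts m).2.2.2)]
      simp
    rw [this, div_self (by positivity)]
  -- tails of π
  set tπ : ℕ → ℝ := fun K => ∑' i, π (i + K) with htπdef
  have htπ_eq : ∀ K, tπ K = 1 - ∑ x ∈ Finset.range K, π x := by
    intro K
    have := Summable.sum_add_tsum_nat_add (f := π) K hπ1.summable
    rw [hπ1.tsum_eq] at this
    rw [htπdef]
    linarith
  have htπ0 : Tendsto tπ atTop (𝓝 0) := by
    have h1 : Tendsto (fun K => ∑ x ∈ Finset.range K, π x) atTop (𝓝 1) :=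
      hπ1.tendsto_sum_nat
    have h2 : Tendsto (fun K => 1 - ∑ x ∈ Finset.range K, π x) atTop (𝓝 (1 - 1)) :=
      tendsto_const_nhds.sub h1
    simp only [sub_self] at h2
    exact h2.congr (fun K => (htπ_eq K).symm)
  have hbtail : ∀ M, 1 ≤ M → ∀ K, 1 - c * tπ K ≤ ∑ x ∈ Finset.range K, b M x := by
    intro M hM K
    have hsplit := Summable.sum_add_tsum_nat_add (f := b M) K (hbs M)
    rw [hbmass M hM] at hsplit
    have htail_le : ∑' i, b M (i + K) ≤ c * tπ K := by
      have hsl : Summable (fun i => b M (i + K)) :=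
        (hbs M).comp_injective (add_left_injective K)
      have hsr : Summable (fun i => c * π (i + K)) :=
        ((hπ1.summable.comp_injective (add_left_injective K)).mul_left c)
      have := Summable.tsum_le_tsum (fun i => hbdom M (i + K)) hsl hsr
      rw [tsum_mul_left] at this
      rw [htπdef]
      exact this
    linarith
  -- recursion for Cesàro averages
  have hbrec : ∀ M, 1 ≤ M → ∀ y,
      (∑' x, b M x * P x y) = b M y + (ν M y - p y) / M := by
    intro M hM y
    have hstep : ∀ m, ∑' x, (ν m x * P x y) / M = ν (m+1) y / M := by
      intro m
      rw [tsum_div_const]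
      congr 1
      rw [hν_succ m]
    have hintegrand : (fun x => b M x * P x y)
        = fun x => ∑ m ∈ Finset.range M, (ν m x * P x y) / M := by
      funext x
      rw [hbdef]
      simp only
      rw [div_mul_eq_mul_div, Finset.sum_mul, Finset.sum_div]
    rw [hintegrand, Summable.tsum_finsetSum (fun m _ => ((summable_mul_col (hνfacts m).2.2.1 (hνfacts m).1
      (fun x => hP0 x y) (fun x => P_le_one hP0 hP1 x y)).div_const M))]
    rw [Finset.sum_congr rfl (fun m _ => hstep m)]
    rw [← Finset.sum_div]
    have hshift : ∑ m ∈ Finset.range M, ν (m+1) y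
        = ∑ m ∈ Finset.range M, ν m y + ν M y - ν 0 y := by
      have h1 := Finset.sum_range_succ' (fun m => ν m y) M
      have h2 := Finset.sum_range_succ (fun m => ν m y) M
      rw [h2] at h1
      linarith
    rw [hshift, hν_zero, hbdef]
    simp only
    ring
  -- ultrafilter limit
  set U : Ultrafilter ℕ := Ultrafilter.of atTop with hUdef
  have hUle : (U : Filter ℕ) ≤ atTop := Ultrafilter.of_le _
  have hex : ∀ x, ∃ l ∈ Set.Icc 0 (c * π x), Tendsto (fun M => b M x) U (𝓝 l) :=
    fun x => exists_ulim U _ 0 (c * π x) (fun M => ⟨hb0 M x, hbdom M x⟩)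
  choose ρ hρmem hρtend using hex
  have hρ0 : ∀ x, 0 ≤ ρ x := fun x => (hρmem x).1
  have hρdom : ∀ x, ρ x ≤ c * π x := fun x => (hρmem x).2
  have hρs : Summable ρ := Summable.of_nonneg_of_le hρ0 hρdom (hπ1.summable.mul_left c)
  have hρheads_tend : ∀ K, Tendsto (fun M => ∑ x ∈ Finset.range K, b M x) U
      (𝓝 (∑ x ∈ Finset.range K, ρ x)) := by
    intro K
    exact tendsto_finset_sum _ (fun x _ => hρtend x)
  have hρheads_le : ∀ K, ∑ x ∈ Finset.range K, ρ x ≤ ∑ x ∈ Finset.range K, p x := by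
    intro K
    exact le_of_tendsto (hρheads_tend K) (Filter.Eventually.of_forall (fun M => hbheads M K))
  have hρheads_ge : ∀ K, 1 - c * tπ K ≤ ∑ x ∈ Finset.range K, ρ x := by
    intro K
    apply ge_of_tendsto (hρheads_tend K)
    have : ∀ᶠ M in atTop, 1 - c * tπ K ≤ ∑ x ∈ Finset.range K, b M x := by
      filter_upwards [eventually_ge_atTop 1] with M hM
      exact hbtail M hM K
    exact this.filter_mono hUle
  have hρmass : ∑' x, ρ x = 1 := by
    have hub : ∑' x, ρ x ≤ 1 := by
      apply Real.tsum_le_of_sum_range_le hρ0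
      intro K
      calc ∑ x ∈ Finset.range K, ρ x ≤ ∑ x ∈ Finset.range K, p x := hρheads_le K
      _ ≤ ∑' x, p x := Summable.sum_le_tsum _ (fun x _ => hp0 x) hps
      _ = 1 := hptsum
    have hlb : 1 ≤ ∑' x, ρ x := by
      have h1 : Tendsto (fun K => 1 - c * tπ K) atTop (𝓝 (1 - c * 0)) :=
        tendsto_const_nhds.sub (htπ0.const_mul c)
      rw [mul_zero, sub_zero] at h1
      apply le_of_tendsto h1
      filter_upwards with K
      calc 1 - c * tπ K ≤ ∑ x ∈ Finset.range K, ρ x := hρheads_ge K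
      _ ≤ ∑' x, ρ x := Summable.sum_le_tsum _ (fun x _ => hρ0 x) hρs
    linarith
  -- substationarity of ρ
  have hρsub : ∀ y, ∑' x, ρ x * P x y ≤ ρ y := by
    intro y
    apply Real.tsum_le_of_sum_range_le (fun x => mul_nonneg (hρ0 x) (hP0 x y))
    intro K
    have hLHS : Tendsto (fun M => ∑ x ∈ Finset.range K, b M x * P x y) U
        (𝓝 (∑ x ∈ Finset.range K, ρ x * P x y)) :=
      tendsto_finset_sum _ (fun x _ => (hρtend x).mul_const (P x y))
    have herr : Tendsto (fun M => (ν M y - p y) / M) U (𝓝 0) := by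
      have hgt : Tendsto (fun M : ℕ => (c * π y + 1) / (M:ℝ)) atTop (𝓝 0) :=
        tendsto_const_div_atTop_nhds_zero_nat _
      have hbnd : ∀ M : ℕ, ‖(ν M y - p y) / (M:ℝ)‖ ≤ (c * π y + 1) / (M:ℝ) := by
        intro M
        rcases Nat.eq_zero_or_pos M with h | h
        · subst h; simp
        · have habs : |ν M y - p y| ≤ c * π y + 1 := by
            have h1 : 0 ≤ ν M y := (hνfacts M).1 y
            have h2 : ν M y ≤ c * π y := (hνfacts M).2.1 y
            have h3 := hp0 y
            have h4 := hple1 y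
            rw [abs_le]
            constructor <;> nlinarith
          calc ‖(ν M y - p y) / (M:ℝ)‖ = |ν M y - p y| / M := by
                rw [Real.norm_eq_abs, abs_div, Nat.abs_cast]
          _ ≤ (c * π y + 1) / M := by gcongr
      exact (squeeze_zero_norm hbnd hgt).mono_left hUle
    have hRHS : Tendsto (fun M => b M y + (ν M y - p y) / M) U (𝓝 (ρ y + 0)) :=
      (hρtend y).add herr
    rw [add_zero] at hRHS
    apply le_of_tendsto_of_tendsto' hLHS hRHS
    intro M
    rcases Nat.eq_zero_or_pos M with h | h
    · subst h
      simp [hbdef]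
    · rw [← hbrec M h y]
      apply Summable.sum_le_tsum _ (fun x _ => mul_nonneg (hb0 M x) (hP0 x y))
      exact summable_mul_col (hbs M) (hb0 M) (fun x => hP0 x y)
        (fun x => P_le_one hP0 hP1 x y)
  have hρeq : ρ = π := substat_eq_pi hP0 hP1 hirred hπ0 hπ1 hπstat hρ0 hρs hρmass hρsub
  intro K
  calc ∑ x ∈ Finset.range K, π x = ∑ x ∈ Finset.range K, ρ x := by rw [hρeq]
  _ ≤ ∑ x ∈ Finset.range K, p x := hρheads_le K

end

end MGA

/-- Let `X` be an irreducible positive recurrent stochastically monotone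
Markov chain on `ℤ₊` with stationary distribution `π`, and `A_n = {0,...,n}`. For any
general augmentations `Pn` of the northwest-corner truncations (`Pn` stochastic on `A_n`
with `Pn(x,y) ≥ P(x,y)`), any stationary distribution `πn` of `Pn` (extended by zero)
satisfies `∑_x |πn(x) - π(x)| → 0`. -/
theorem monotone_general_augmentation_converges
    (P : ℕ → ℕ → ℝ)
    (hPnonneg : ∀ x y, 0 ≤ P x y)
    (hPstoch : ∀ x, HasSum (P x) 1)
    (hirred : ∀ x y, ∃ m, 0 < matPow P m x y)
    (hmono : ∀ y : ℕ, Monotone (fun x => ∑' w, if y ≤ w then P x w else 0))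
    (π : ℕ → ℝ)
    (hπ_nonneg : ∀ x, 0 ≤ π x) (hπ_prob : HasSum π 1)
    (hπ_stat : ∀ y, ∑' x, π x * P x y = π y)
    (Pn : ℕ → ℕ → ℕ → ℝ)
    (hPn_nonneg : ∀ n x y, 0 ≤ Pn n x y)
    (hPn_stoch : ∀ n, ∀ x ≤ n, ∑ y ∈ Finset.range (n + 1), Pn n x y = 1)
    (hPn_ge : ∀ n, ∀ x ≤ n, ∀ y ≤ n, P x y ≤ Pn n x y)
    (πn : ℕ → ℕ → ℝ)
    (hπn_nonneg : ∀ n x, 0 ≤ πn n x)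
    (hπn_supp : ∀ n, ∀ x, n < x → πn n x = 0)
    (hπn_prob : ∀ n, ∑ x ∈ Finset.range (n + 1), πn n x = 1)
    (hπn_stat : ∀ n, ∀ y ≤ n, ∑ x ∈ Finset.range (n + 1), πn n x * Pn n x y = πn n y) :
    Tendsto (fun n => ∑' x, |πn n x - π x|) atTop (𝓝 0) := by
  classical
  -- heads comparison from the key lemma
  have hheadsD : ∀ n K, ∑ x ∈ Finset.range K, π x ≤ ∑ x ∈ Finset.range K, πn n x :=
    fun n => MGA.heads_le hPnonneg hPstoch hirred hmono hπ_nonneg hπ_prob hπ_stat n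
      (Pn n) (πn n) (hPn_nonneg n) (hPn_stoch n) (hPn_ge n) (hπn_nonneg n) (hπn_supp n)
      (hπn_prob n) (hπn_stat n)
  -- basic facts about πn n
  have hsupp' : ∀ n, ∀ x ∉ Finset.range (n+1), πn n x = 0 := fun n x hx =>
    hπn_supp n x (by simpa [Finset.mem_range, Nat.lt_succ_iff, not_le] using hx)
  have hπns : ∀ n, Summable (πn n) := fun n =>
    summable_of_ne_finset_zero (s := Finset.range (n+1)) (hsupp' n)
  have hπntsum : ∀ n, ∑' x, πn n x = 1 := fun n => by
    rw [tsum_eq_sum (hsupp' n)]; exact hπn_prob n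
  have hπnheads_le1 : ∀ n K, ∑ x ∈ Finset.range K, πn n x ≤ 1 := by
    intro n K
    calc ∑ x ∈ Finset.range K, πn n x ≤ ∑' x, πn n x :=
        Summable.sum_le_tsum _ (fun x _ => hπn_nonneg n x) (hπns n)
    _ = 1 := hπntsum n
  have hπnle1 : ∀ n x, πn n x ≤ 1 := by
    intro n x
    calc πn n x ≤ ∑ z ∈ Finset.range (x+1), πn n z :=
        Finset.single_le_sum (fun z _ => hπn_nonneg n z) (by simp)
    _ ≤ 1 := hπnheads_le1 n (x+1)
  -- pointwise convergence
  have hpt : ∀ x, Tendsto (fun n => πn n x) atTop (𝓝 (π x)) := by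
    intro x
    rw [tendsto_iff_ultrafilter]
    intro V hV
    have hex : ∀ z, ∃ l ∈ Set.Icc (0:ℝ) 1, Tendsto (fun n => πn n z) V (𝓝 l) :=
      fun z => MGA.exists_ulim V _ 0 1 (fun n => ⟨hπn_nonneg n z, hπnle1 n z⟩)
    choose μ hμmem hμtend using hex
    have hμ0 : ∀ z, 0 ≤ μ z := fun z => (hμmem z).1
    have hμheads_tend : ∀ K, Tendsto (fun n => ∑ z ∈ Finset.range K, πn n z) V
        (𝓝 (∑ z ∈ Finset.range K, μ z)) := fun K =>
      tendsto_finset_sum _ (fun z _ => hμtend z)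
    have hμheads_ge : ∀ K, ∑ z ∈ Finset.range K, π z ≤ ∑ z ∈ Finset.range K, μ z := fun K =>
      ge_of_tendsto (hμheads_tend K) (Filter.Eventually.of_forall (fun n => hheadsD n K))
    have hμheads_le1 : ∀ K, ∑ z ∈ Finset.range K, μ z ≤ 1 := fun K =>
      le_of_tendsto (hμheads_tend K) (Filter.Eventually.of_forall (fun n => hπnheads_le1 n K))
    have hμs : Summable μ := summable_of_sum_range_le hμ0 hμheads_le1
    have hμmass : ∑' z, μ z = 1 := by
      have hub : ∑' z, μ z ≤ 1 := Real.tsum_le_of_sum_range_le hμ0 hμheads_le1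
      have hlb : 1 ≤ ∑' z, μ z := by
        apply le_of_tendsto hπ_prob.tendsto_sum_nat
        filter_upwards with K
        calc ∑ z ∈ Finset.range K, π z ≤ ∑ z ∈ Finset.range K, μ z := hμheads_ge K
        _ ≤ ∑' z, μ z := Summable.sum_le_tsum _ (fun z _ => hμ0 z) hμs
      linarith
    have hμsub : ∀ y, ∑' z, μ z * P z y ≤ μ y := by
      intro y
      apply Real.tsum_le_of_sum_range_le (fun z => mul_nonneg (hμ0 z) (hPnonneg z y))
      intro K
      have hLHS : Tendsto (fun n => ∑ z ∈ Finset.range K, πn n z * P z y) V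
          (𝓝 (∑ z ∈ Finset.range K, μ z * P z y)) :=
        tendsto_finset_sum _ (fun z _ => (hμtend z).mul_const (P z y))
      have hev : ∀ᶠ n in (V : Filter ℕ),
          ∑ z ∈ Finset.range K, πn n z * P z y ≤ πn n y := by
        apply Filter.Eventually.filter_mono hV
        filter_upwards [eventually_ge_atTop (max y K)] with n hn
        have hyn : y ≤ n := le_trans (le_max_left _ _) hn
        have hKn : K ≤ n + 1 := le_trans (le_trans (le_max_right _ _) hn) (Nat.le_succ n)
        calc ∑ z ∈ Finset.range K, πn n z * P z y
            ≤ ∑ z ∈ Finset.range (n+1), πn n z * P z y := by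
              apply Finset.sum_le_sum_of_subset_of_nonneg
              · exact Finset.range_subset_range.2 hKn
              · intro z _ _; exact mul_nonneg (hπn_nonneg n z) (hPnonneg z y)
          _ ≤ ∑ z ∈ Finset.range (n+1), πn n z * Pn n z y := by
              apply Finset.sum_le_sum
              intro z hz
              have hzn : z ≤ n := by
                have := Finset.mem_range.mp hz; omega
              exact mul_le_mul_of_nonneg_left (hPn_ge n z hzn y hyn) (hπn_nonneg n z)
          _ = πn n y := hπn_stat n y hyn
      exact le_of_tendsto_of_tendsto hLHS (hμtend y) hev
    have hμπ : μ = π := MGA.substat_eq_pi hPnonneg hPstoch hirred hπ_nonneg hπ_prob hπ_stat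
      hμ0 hμs hμmass hμsub
    have h := hμtend x
    rw [hμπ] at h
    exact h
  -- L¹ convergence
  have hdsum : ∀ n, Summable (fun x => |πn n x - π x|) := fun n =>
    ((hπns n).sub hπ_prob.summable).abs
  rw [Metric.tendsto_atTop]
  intro ε hε
  -- choose K with small π-tail
  obtain ⟨K, hK⟩ : ∃ K, 1 - ∑ x ∈ Finset.range K, π x < ε / 4 := by
    have := hπ_prob.tendsto_sum_nat
    rw [Metric.tendsto_atTop] at this
    obtain ⟨K, hK⟩ := this (ε/4) (by linarith)
    refine ⟨K, ?_⟩
    have := hK K le_rfl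
    rw [Real.dist_eq] at this
    have h2 := abs_lt.mp this
    linarith [h2.1, h2.2]
  -- finite part small eventually
  have hfin : Tendsto (fun n => ∑ x ∈ Finset.range K, |πn n x - π x|) atTop (𝓝 0) := by
    have h0 : (0:ℝ) = ∑ x ∈ Finset.range K, (0:ℝ) := by simp
    rw [h0]
    apply tendsto_finset_sum
    intro x _
    have h1 : Tendsto (fun n => πn n x - π x) atTop (𝓝 0) := by
      have := (hpt x).sub (tendsto_const_nhds (x := π x))
      simpa using this
    have := h1.abs
    simpa using this
  rw [Metric.tendsto_atTop] at hfin
  obtain ⟨N, hN⟩ := hfin (ε/4) (by linarith)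
  refine ⟨N, fun n hn => ?_⟩
  have hNn := hN n hn
  rw [Real.dist_eq, sub_zero, abs_of_nonneg (by positivity : (0:ℝ) ≤ ∑ x ∈ Finset.range K, |πn n x - π x|)] at hNn
  rw [Real.dist_eq, sub_zero,
    abs_of_nonneg (tsum_nonneg (fun x => abs_nonneg (πn n x - π x)))]
  -- split head and tail
  have hsplit := Summable.sum_add_tsum_nat_add (f := fun x => |πn n x - π x|) K (hdsum n)
  have htail : ∑' i, |πn n (i + K) - π (i + K)| ≤
      (1 - ∑ x ∈ Finset.range K, πn n x) + (1 - ∑ x ∈ Finset.range K, π x) := by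
    have hs1 : Summable (fun i => πn n (i + K)) :=
      (hπns n).comp_injective (add_left_injective K)
    have hs2 : Summable (fun i => π (i + K)) :=
      hπ_prob.summable.comp_injective (add_left_injective K)
    have hb : ∀ i, |πn n (i + K) - π (i + K)| ≤ πn n (i + K) + π (i + K) := by
      intro i
      have := abs_sub (πn n (i+K)) (π (i+K))
      calc |πn n (i + K) - π (i + K)| ≤ |πn n (i+K)| + |π (i+K)| := abs_sub _ _
      _ = πn n (i + K) + π (i + K) := by
          rw [abs_of_nonneg (hπn_nonneg n _), abs_of_nonneg (hπ_nonneg _)]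
    calc ∑' i, |πn n (i + K) - π (i + K)| ≤ ∑' i, (πn n (i + K) + π (i + K)) :=
        Summable.tsum_le_tsum hb ((hdsum n).comp_injective (add_left_injective K)) (hs1.add hs2)
    _ = (∑' i, πn n (i + K)) + ∑' i, π (i + K) := Summable.tsum_add hs1 hs2
    _ = (1 - ∑ x ∈ Finset.range K, πn n x) + (1 - ∑ x ∈ Finset.range K, π x) := by
        have e1 := Summable.sum_add_tsum_nat_add (f := πn n) K (hπns n)
        have e2 := Summable.sum_add_tsum_nat_add (f := π) K hπ_prob.summable
        rw [hπntsum n] at e1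
        rw [hπ_prob.tsum_eq] at e2
        linarith
  have htailπn : 1 - ∑ x ∈ Finset.range K, πn n x ≤ 1 - ∑ x ∈ Finset.range K, π x := by
    linarith [hheadsD n K]
  linarith [hsplit, htail, htailπn, hK, hNn]
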